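/- Let m be a positive integer and let x, y be complex numbers. Define λ = 2 + (y-2)(y+2-x^2)·S_{m-1}(y)^2 and α = 1 - (y+2-x^2)·S_{m-1}(y)·(S_{m-1}(y) - S_{m-2}(y)). Then α^2 - α·λ + 1 = (y+2-x^2)·S_{m-1}(y)^2·(λ+2-x^2). -/

import Mathlib

open Real

/-- Auxiliary sequence for the Chebyshev-like polynomials on natural indices. -/
def Saux {R : Type*} [CommRing R] : ℕ → R → R
  | 0, _ => 1
  | 1, z => z
  | (n + 2), z => z * Saux (n + 1) z - Saux n z

/-- The Chebyshev-like polynomials `S j` indexed by all integers `j`: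
`S 0 z = 1`, `S 1 z = z`, and `S (j + 1) z = z * S j z - S (j - 1) z` for all `j : ℤ`
(so `S (-1) z = 0`, `S (-2) z = -1`, and in general `S (-j) z = -S (j - 2) z`). -/
def S {R : Type*} [CommRing R] (j : ℤ) (z : R) : R :=
  if 0 ≤ j then Saux j.toNat z
  else if j = -1 then 0
  else -Saux (-j - 2).toNat z

/-! With `u = (y + 2 - x²) S_{m-1}(y)`, the difference of the two sides is
`u² (S_{m-2}² + S_{m-1}² - y S_{m-2} S_{m-1} - 1)`, which vanishes by the Cassini-type relation
of the Chebyshev sequence. That relation holds at every integer index, since `S j` is the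
evaluation of Mathlib's rescaled Chebyshev polynomial `Polynomial.Chebyshev.S R j`. -/

section Chebyshev

open Polynomial

variable {R : Type*} [CommRing R]

theorem Saux_eq_eval_chebyshevS (z : R) (n : ℕ) :
    Saux n z = (Chebyshev.S R n).eval z := by
  induction n using Nat.twoStepInduction with
  | zero => simp [Saux]
  | one => simp [Saux]
  | more n ih₀ ih₁ =>
    have h := Chebyshev.S_add_two R n
    push_cast at h ⊢
    rw [Saux, h, ih₀, ih₁]
    simp

theorem S_eq_eval_chebyshevS (j : ℤ) (z : R) : S j z = (Chebyshev.S R j).eval z := by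
  unfold S
  split_ifs with hj hj'
  · rw [Saux_eq_eval_chebyshevS, Int.toNat_of_nonneg hj]
  · simp [hj']
  · have hcast : ((-j - 2).toNat : ℤ) = -j - 2 := Int.toNat_of_nonneg (by omega)
    rw [Saux_eq_eval_chebyshevS, hcast, ← eval_neg, ← Chebyshev.S_neg_sub_two]
    ring_nf

theorem S_sq_add_S_sq_sub_mul (j : ℤ) (z : R) :
    S j z ^ 2 + S (j + 1) z ^ 2 - z * S j z * S (j + 1) z = 1 := by
  simpa [S_eq_eval_chebyshevS] using congrArg (eval z) (Chebyshev.S_sq_add_S_sq R j)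

end Chebyshev

theorem stmt5_general (m : ℕ) (x y lam alp : ℂ)
    (hlam : lam = 2 + (y - 2) * (y + 2 - x ^ 2) * S ((m : ℤ) - 1) y ^ 2)
    (halp : alp = 1 - (y + 2 - x ^ 2) * S ((m : ℤ) - 1) y * (S ((m : ℤ) - 1) y - S ((m : ℤ) - 2) y)) :
    alp ^ 2 - alp * lam + 1 = (y + 2 - x ^ 2) * S ((m : ℤ) - 1) y ^ 2 * (lam + 2 - x ^ 2) := by
  have cassini := S_sq_add_S_sq_sub_mul ((m : ℤ) - 2) y
  rw [show (m : ℤ) - 2 + 1 = m - 1 by ring] at cassini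
  subst hlam halp
  linear_combination ((y + 2 - x ^ 2) * S ((m : ℤ) - 1) y) ^ 2 * cassini

theorem stmt5 (m : ℕ) (hm : 0 < m) (x y lam alp : ℂ)
    (hlam : lam = 2 + (y - 2) * (y + 2 - x ^ 2) * S ((m : ℤ) - 1) y ^ 2)
    (halp : alp = 1 - (y + 2 - x ^ 2) * S ((m : ℤ) - 1) y * (S ((m : ℤ) - 1) y - S ((m : ℤ) - 2) y)) :
    alp ^ 2 - alp * lam + 1 = (y + 2 - x ^ 2) * S ((m : ℤ) - 1) y ^ 2 * (lam + 2 - x ^ 2) :=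
  stmt5_general m x y lam alp hlam halp
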